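/- arXiv:math/9907055 — 2 statements merged into one kernel-verified Lean document; each statement's English description precedes it below -/
import Mathlib

section
/- In $\mathbb{Q}(x,y,z)$, with $\beta_1,\dots,\beta_{10}$ and $m_1,\dots,m_{10}$ as given, one has $\frac{1}{4}\sum_{i=1}^{10} m_i^4\,\beta_i = 4(-x-y+z)$. -/
/-!
Every denominator in the residue sum is a product of the seven linear forms
`x, y, z, x - y, x - z, y - z, x - y + z`. In `ℚ(x, y, z)` none of them vanishes, since none vanishes
at the point `(1, 2, 4)`; clearing denominators then turns the claim into a polynomial identity.
-/

open MvPolynomial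

section ResidueSum

variable {K : Type*} [Field K]

/-- `βᵢ`, indexed by the ten torus-fixed points of the small resolution: the reciprocal of the
product of the torus weights on the tangent space there. -/
def residueWeight (x y z : K) : Fin 10 → K := ![
  -1 / (x * (y - z) * z),
  1 / (x * y * (y - z)),
  -1 / (x * (x - y) * (x - y + z)),
  1 / (x * (y - z) * (x - z)),
  1 / (x * (y - z) * z),
  -1 / ((x - y) * (y - z) * (x - y + z)),
  1 / ((x - y) * (x - z) * z),
  -1 / (x * z * (x - y + z)),
  -1 / (x * y * (y - z)),
  1 / (x * (x - y) * (x - y + z))]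

/-- `mᵢ`, with the indexing of `residueWeight`. -/
def momentWeight (x y z : K) : Fin 10 → K := ![
  -x - y, -x - z, x - z, -y + 2 * z, -x - y + 2 * z,
  y, 2 * x - y, 2 * x - y, -x + 2 * y - z, -x + 2 * y - z]

theorem sum_momentWeight_pow_four_mul_residueWeight {x y z : K} (hx : x ≠ 0) (hy : y ≠ 0)
    (hz : z ≠ 0) (hxy : x - y ≠ 0) (hxz : x - z ≠ 0) (hyz : y - z ≠ 0) (hxyz : x - y + z ≠ 0) :
    ∑ i : Fin 10, momentWeight x y z i ^ 4 * residueWeight x y z i = 16 * (-x - y + z) := by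
  simp only [Fin.sum_univ_succ, Fin.sum_univ_zero, momentWeight, residueWeight,
    Matrix.cons_val_zero, Matrix.cons_val_succ]
  field_simp
  ring

end ResidueSum

theorem algebraMap_fractionRing_ne_zero_of_eval_ne_zero {σ R : Type*} [CommRing R]
    {p : MvPolynomial σ R} (v : σ → R) (h : eval v p ≠ 0) :
    algebraMap (MvPolynomial σ R) (FractionRing (MvPolynomial σ R)) p ≠ 0 :=
  (map_ne_zero_iff _ (IsFractionRing.injective _ _)).mpr fun hp => h (by simp [hp])

/-- Generalized Futaki invariant of the toric blow-up: `¼ ∑ mᵢ⁴ βᵢ = 4(-x-y+z)`. -/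
theorem toric_futaki_invariant :
    let F := FractionRing (MvPolynomial (Fin 3) ℚ)
    let x : F := algebraMap (MvPolynomial (Fin 3) ℚ) F (X 0)
    let y : F := algebraMap (MvPolynomial (Fin 3) ℚ) F (X 1)
    let z : F := algebraMap (MvPolynomial (Fin 3) ℚ) F (X 2)
    let β : Fin 10 → F := ![
      -1 / (x * (y - z) * z),
      1 / (x * y * (y - z)),
      -1 / (x * (x - y) * (x - y + z)),
      1 / (x * (y - z) * (x - z)),
      1 / (x * (y - z) * z),
      -1 / ((x - y) * (y - z) * (x - y + z)),
      1 / ((x - y) * (x - z) * z),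
      -1 / (x * z * (x - y + z)),
      -1 / (x * y * (y - z)),
      1 / (x * (x - y) * (x - y + z))]
    let m : Fin 10 → F := ![
      -x - y, -x - z, x - z, -y + 2 * z, -x - y + 2 * z,
      y, 2 * x - y, 2 * x - y, -x + 2 * y - z, -x + 2 * y - z]
    (1 / 4 : F) * ∑ i : Fin 10, m i ^ 4 * β i = 4 * (-x - y + z) := by
  intro F x y z β m
  have nonvanishing (p : MvPolynomial (Fin 3) ℚ) (h : eval ![1, 2, 4] p ≠ 0) :
      algebraMap _ F p ≠ 0 :=
    algebraMap_fractionRing_ne_zero_of_eval_ne_zero _ h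
  have hxy : x - y ≠ 0 := by
    have := nonvanishing (X 0 - X 1) (by simp; norm_num)
    rwa [map_sub] at this
  have hxz : x - z ≠ 0 := by
    have := nonvanishing (X 0 - X 2) (by simp; norm_num)
    rwa [map_sub] at this
  have hyz : y - z ≠ 0 := by
    have := nonvanishing (X 1 - X 2) (by simp; norm_num)
    rwa [map_sub] at this
  have hxyz : x - y + z ≠ 0 := by
    have := nonvanishing (X 0 - X 1 + X 2) (by simp; norm_num)
    rwa [map_add, map_sub] at this
  have hsum := sum_momentWeight_pow_four_mul_residueWeight (nonvanishing (X 0) (by simp))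
    (nonvanishing (X 1) (by simp)) (nonvanishing (X 2) (by simp)) hxy hxz hyz hxyz
  change (1 / 4 : F) * ∑ i, momentWeight x y z i ^ 4 * residueWeight x y z i = _
  rw [hsum]
  ring
end

section
/- In the field $\mathbb{Q}(x,y)$, define $\beta_1 = \frac{1}{xy(2x-y)}$, $\beta_2 = \frac{-1}{2x^2(2x-y)}$, $\beta_3 = \frac{1}{x^2(x-y)}$, $\beta_4 = \frac{1}{x(x-y)(2x-y)}$, $\beta_6 = \frac{-1}{xy(2x-y)}$, $\beta_7 = \frac{-1}{x(x-y)(2x-y)}$, and $m_1 = 3x$, $m_2 = x+y$, $m_3 = -x+y$, $m_4 = -2x$, $m_5 = -3x+y$, $m_6 = 3x-2y$, $m_7 = 2(x-y)$. Then $\frac{1}{4}\Big[\,38\,m_5 + \sum_{j \in \{1,2,3,4,6,7\}} m_j^3\,\beta_j\,(m_j - m_5)\Big] = 4(3x-y)$. -/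
open MvPolynomial

set_option maxHeartbeats 2000000 in
/-- Futaki invariant of the singular blow-up of `ℙ³`, computed by the Bott
residue trick eliminating the unknown contribution at the singular point:
`¼ (38 m₅ + ∑_{j≠5} mⱼ³ βⱼ (mⱼ - m₅)) = 4(3x - y)` in `ℚ(x,y)`. -/
theorem singular_blowup_futaki :
    let F := FractionRing (MvPolynomial (Fin 2) ℚ)
    let x : F := algebraMap (MvPolynomial (Fin 2) ℚ) F (X 0)
    let y : F := algebraMap (MvPolynomial (Fin 2) ℚ) F (X 1)
    let β₁ : F := 1 / (x * y * (2 * x - y))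
    let β₂ : F := -1 / (2 * x ^ 2 * (2 * x - y))
    let β₃ : F := 1 / (x ^ 2 * (x - y))
    let β₄ : F := 1 / (x * (x - y) * (2 * x - y))
    let β₆ : F := -1 / (x * y * (2 * x - y))
    let β₇ : F := -1 / (x * (x - y) * (2 * x - y))
    let m₁ : F := 3 * x
    let m₂ : F := x + y
    let m₃ : F := -x + y
    let m₄ : F := -2 * x
    let m₅ : F := -3 * x + y
    let m₆ : F := 3 * x - 2 * y
    let m₇ : F := 2 * (x - y)
    (1 / 4 : F) *
        (38 * m₅ +
          (m₁ ^ 3 * β₁ * (m₁ - m₅) + m₂ ^ 3 * β₂ * (m₂ - m₅) +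
            m₃ ^ 3 * β₃ * (m₃ - m₅) + m₄ ^ 3 * β₄ * (m₄ - m₅) +
            m₆ ^ 3 * β₆ * (m₆ - m₅) + m₇ ^ 3 * β₇ * (m₇ - m₅)))
      = 4 * (3 * x - y) := by
  intro F x y β₁ β₂ β₃ β₄ β₆ β₇ m₁ m₂ m₃ m₄ m₅ m₆ m₇
  have hinj : Function.Injective (algebraMap (MvPolynomial (Fin 2) ℚ) F) :=
    IsFractionRing.injective _ _
  have hx : x ≠ 0 := by
    simpa using fun h => X_ne_zero (R := ℚ) (0 : Fin 2) (hinj (h.trans (map_zero _).symm))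
  have hy : y ≠ 0 := by
    simpa using fun h => X_ne_zero (R := ℚ) (1 : Fin 2) (hinj (h.trans (map_zero _).symm))
  have hxy : x - y ≠ 0 := by
    intro h
    have : (X 0 : MvPolynomial (Fin 2) ℚ) - X 1 = 0 := by
      apply hinj
      rw [map_sub, map_zero]; exact h
    have := congrArg (eval fun i : Fin 2 => if i = 0 then (1:ℚ) else 0) this
    simp at this
  have h2xy : 2 * x - y ≠ 0 := by
    intro h
    have : (2 * X 0 : MvPolynomial (Fin 2) ℚ) - X 1 = 0 := by
      apply hinj
      rw [map_sub, map_mul, map_zero, map_ofNat]; exact h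
    have := congrArg (eval fun i : Fin 2 => if i = 0 then (1:ℚ) else 0) this
    simp at this
  have h2 : (2:F) ≠ 0 := by
    intro h
    have : ((2:MvPolynomial (Fin 2) ℚ)) = 0 := hinj (by rw [map_ofNat, map_zero]; exact h)
    exact two_ne_zero this
  simp only [β₁, β₂, β₃, β₄, β₆, β₇, m₁, m₂, m₃, m₄, m₅, m₆, m₇]
  have hDne : (2 * x ^ 2 * y * (x - y) * (2 * x - y) : F) ≠ 0 :=
    mul_ne_zero (mul_ne_zero (mul_ne_zero (mul_ne_zero h2 (pow_ne_zero 2 hx)) hy) hxy) h2xy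
  obtain ⟨t, hDt⟩ : ∃ t : F, (2 * x ^ 2 * y * (x - y) * (2 * x - y)) * t = 1 :=
    ⟨_, mul_inv_cancel₀ hDne⟩
  have e1 : (1:F) / (x * y * (2 * x - y)) = 2 * x * (x - y) * t := by
    rw [div_eq_iff (mul_ne_zero (mul_ne_zero hx hy) h2xy)]
    linear_combination -hDt
  have e2 : (1:F) / (2 * x ^ 2 * (2 * x - y)) = y * (x - y) * t := by
    rw [div_eq_iff (mul_ne_zero (mul_ne_zero h2 (pow_ne_zero 2 hx)) h2xy)]
    linear_combination -hDt
  have e3 : (1:F) / (x ^ 2 * (x - y)) = 2 * y * (2 * x - y) * t := by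
    rw [div_eq_iff (mul_ne_zero (pow_ne_zero 2 hx) hxy)]
    linear_combination -hDt
  have e4 : (1:F) / (x * (x - y) * (2 * x - y)) = 2 * x * y * t := by
    rw [div_eq_iff (mul_ne_zero (mul_ne_zero hx hxy) h2xy)]
    linear_combination -hDt
  have h4 : (4:F) ≠ 0 := by
    intro h; apply h2; have : (4:F) = 2 * 2 := by norm_num
    rcases mul_eq_zero.mp (this ▸ h) with h' | h' <;> exact h'
  rw [div_mul_eq_mul_div, div_eq_iff h4]
  simp only [neg_div, e1, e2, e3, e4]
  linear_combination (54 * (3 * x - y) : F) * hDt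
end
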